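/- Let G1=(V1,E1,ℓ1), G2=(V2,E2,ℓ2), G3=(V3,E3,ℓ3) be labeled graphs with single-character vertex labels, and let v1∈V1, v2∈V2, v3∈V3 with ℓ1(v1)≠ℓ2(v2). Then S_IC(v1,v2,v3) = (⋃_{(u1,v1)∈E1} S_IC(u1,v2,v3)) ∪ (⋃_{(u2,v2)∈E2} S_IC(v1,u2,v3)); in particular, if neither v1 nor v2 has an in-coming edge, then S_IC(v1,v2,v3)=∅. -/

import Mathlib

open List Relation

section Defs

variable {V V1 V2 V3 α : Type*}

/-- A (directed) path: a nonempty list of vertices, consecutive ones joined by edges. -/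
def IsPath (E : V → V → Prop) (p : List V) : Prop :=
  p ≠ [] ∧ p.Chain' E

/-- Paths ending at `v` (the set `P(v)`). -/
def EndsAt (E : V → V → Prop) (v : V) (p : List V) : Prop :=
  IsPath E p ∧ p.getLast? = some v

/-- A path is left-maximal if its first vertex has no in-coming edges. -/
def LeftMax (E : V → V → Prop) (p : List V) : Prop :=
  ∀ w u, p.head? = some w → ¬ E u w

/-- A path is right-maximal if its last vertex has no out-going edges. -/
def RightMax (E : V → V → Prop) (p : List V) : Prop :=
  ∀ w u, p.getLast? = some w → ¬ E w u

/-- `Subseq(ℓ(P(v)))`: subsequences of label strings of paths ending at `v`. -/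
def SubseqAt (E : V → V → Prop) (ℓ : V → α) (v : V) : Set (List α) :=
  {z | ∃ p, EndsAt E v p ∧ z.Sublist (p.map ℓ)}

/-- `Subseq(ℓ(LMP(v)))`: subsequences of label strings of left-maximal paths ending at `v`. -/
def SubseqLM (E : V → V → Prop) (ℓ : V → α) (v : V) : Set (List α) :=
  {z | ∃ p, EndsAt E v p ∧ LeftMax E p ∧ z.Sublist (p.map ℓ)}

/-- `Subseq(G)`: subsequences of label strings of all paths of `G`. -/
def SubseqG (E : V → V → Prop) (ℓ : V → α) : Set (List α) :=
  {z | ∃ p, IsPath E p ∧ z.Sublist (p.map ℓ)}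

/-- A graph is acyclic if no vertex lies on a nonempty cycle. -/
def Acyclic (E : V → V → Prop) : Prop :=
  ∀ v, ¬ Relation.TransGen E v v

/-- The set `S_IC(v1,v2,v3)`. -/
def SIC (E1 : V1 → V1 → Prop) (ℓ1 : V1 → α) (E2 : V2 → V2 → Prop) (ℓ2 : V2 → α)
    (E3 : V3 → V3 → Prop) (ℓ3 : V3 → α) (v1 : V1) (v2 : V2) (v3 : V3) :
    Set (List α) :=
  {z | (∃ q, EndsAt E3 v3 q ∧ LeftMax E3 q ∧ (q.map ℓ3).Sublist z) ∧
       z ∈ SubseqAt E1 ℓ1 v1 ∧ z ∈ SubseqAt E2 ℓ2 v2}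

/-- Maximum length of a string in `S`, with `⊥` (= −∞) for `S = ∅`. -/
noncomputable def maxLen (S : Set (List α)) : WithBot ℕ :=
  sSup ((fun z : List α => (z.length : WithBot ℕ)) '' S)

/-- `L(v1,v2)`: the maximum length of a common subsequence (as a natural number). -/
noncomputable def Lval (E1 : V1 → V1 → Prop) (ℓ1 : V1 → α)
    (E2 : V2 → V2 → Prop) (ℓ2 : V2 → α) (v1 : V1) (v2 : V2) : ℕ :=
  sSup {n | ∃ z ∈ SubseqAt E1 ℓ1 v1 ∩ SubseqAt E2 ℓ2 v2, n = z.length}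

/-- `D(v1,v2,v3)`: the maximum length of a string in `S_IC(v1,v2,v3)`, `−∞` if empty. -/
noncomputable def Dval (E1 : V1 → V1 → Prop) (ℓ1 : V1 → α) (E2 : V2 → V2 → Prop) (ℓ2 : V2 → α)
    (E3 : V3 → V3 → Prop) (ℓ3 : V3 → α) (v1 : V1) (v2 : V2) (v3 : V3) : WithBot ℕ :=
  maxLen (SIC E1 ℓ1 E2 ℓ2 E3 ℓ3 v1 v2 v3)

end Defs

/-!
A string `z` in `S_IC(v1,v2,v3)` is nonempty, since it contains the (nonempty) label string of
a path into `v3`. Its last letter cannot be matched both to `ℓ1(v1)` and to `ℓ2(v2)`, so on at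
least one side the last vertex of the path is not used, and `z` is already a subsequence along
a predecessor of `v1` or of `v2`. Conversely, extending a path by an edge keeps all subsequences.
-/

section Paths

variable {V α : Type*} {E : V → V → Prop} {ℓ : V → α} {u v : V} {p : List V}

lemma EndsAt.snoc (hp : EndsAt E u p) (huv : E u v) : EndsAt E v (p ++ [v]) := by
  refine ⟨⟨by simp, List.isChain_append.2 ⟨hp.1.2, .singleton v, ?_⟩⟩, by simp⟩
  rintro x hx y ⟨⟩
  rw [Option.mem_def, hp.2, Option.some.injEq] at hx
  exact hx ▸ huv

lemma EndsAt.eq_singleton_or_exists_snoc (hp : EndsAt E v p) :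
    p = [v] ∨ ∃ u p', E u v ∧ EndsAt E u p' ∧ p = p' ++ [v] := by
  have hsplit : p.dropLast ++ [v] = p := List.dropLast_append_getLast? v hp.2
  rcases List.eq_nil_or_concat' p.dropLast with hnil | ⟨p', u, hp'⟩
  · left
    simpa [hnil] using hsplit.symm
  · right
    have hchain : (p' ++ [u] ++ [v]).IsChain E := by rw [← hp', hsplit]; exact hp.1.2
    obtain ⟨hchain', -, hedge⟩ := List.isChain_append.1 hchain
    exact ⟨u, p' ++ [u], hedge u (by simp) v (by simp), ⟨⟨by simp, hchain'⟩, by simp⟩,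
      by rw [← hp', hsplit]⟩

lemma subseqAt_subset_of_edge (huv : E u v) : SubseqAt E ℓ u ⊆ SubseqAt E ℓ v := by
  rintro z ⟨p, hp, hz⟩
  exact ⟨p ++ [v], hp.snoc huv, by simpa using hz.trans (List.sublist_append_left _ _)⟩

lemma getLast?_eq_or_exists_edge_mem_subseqAt {z : List α} (hz : z ∈ SubseqAt E ℓ v) (hne : z ≠ []) :
    z.getLast? = some (ℓ v) ∨ ∃ u, E u v ∧ z ∈ SubseqAt E ℓ u := by
  obtain ⟨p, hp, hzp⟩ := hz
  rcases hp.eq_singleton_or_exists_snoc with rfl | ⟨u, p', huv, hp', rfl⟩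
  · left
    rcases List.sublist_singleton.1 hzp with rfl | rfl
    · exact absurd rfl hne
    · rfl
  · rw [List.map_append, List.sublist_append_iff] at hzp
    obtain ⟨z₁, z₂, rfl, hz₁, hz₂⟩ := hzp
    rcases List.sublist_singleton.1 hz₂ with rfl | rfl
    · exact Or.inr ⟨u, huv, p', hp', by simpa using hz₁⟩
    · exact Or.inl (by simp)

end Paths

section SIC

variable {V1 V2 V3 α : Type*} {E1 : V1 → V1 → Prop} {ℓ1 : V1 → α} {E2 : V2 → V2 → Prop}
  {ℓ2 : V2 → α} {E3 : V3 → V3 → Prop} {ℓ3 : V3 → α} {v1 : V1} {v2 : V2} {v3 : V3}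

lemma ne_nil_of_mem_SIC {z : List α} (hz : z ∈ SIC E1 ℓ1 E2 ℓ2 E3 ℓ3 v1 v2 v3) : z ≠ [] := by
  rintro rfl
  obtain ⟨⟨q, hq, -, hqz⟩, -⟩ := hz
  exact hq.1.1 (List.map_eq_nil_iff.1 (List.sublist_nil.1 hqz))

lemma SIC_subset_of_edge_left {u1 : V1} (h : E1 u1 v1) :
    SIC E1 ℓ1 E2 ℓ2 E3 ℓ3 u1 v2 v3 ⊆ SIC E1 ℓ1 E2 ℓ2 E3 ℓ3 v1 v2 v3 :=
  fun _ ⟨hq, h1, h2⟩ => ⟨hq, subseqAt_subset_of_edge h h1, h2⟩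

lemma SIC_subset_of_edge_right {u2 : V2} (h : E2 u2 v2) :
    SIC E1 ℓ1 E2 ℓ2 E3 ℓ3 v1 u2 v3 ⊆ SIC E1 ℓ1 E2 ℓ2 E3 ℓ3 v1 v2 v3 :=
  fun _ ⟨hq, h1, h2⟩ => ⟨hq, h1, subseqAt_subset_of_edge h h2⟩

end SIC

theorem stmt13 {V1 V2 V3 α : Type*}
    (E1 : V1 → V1 → Prop) (ℓ1 : V1 → α) (E2 : V2 → V2 → Prop) (ℓ2 : V2 → α)
    (E3 : V3 → V3 → Prop) (ℓ3 : V3 → α) (v1 : V1) (v2 : V2) (v3 : V3)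
    (hl : ℓ1 v1 ≠ ℓ2 v2) :
    (SIC E1 ℓ1 E2 ℓ2 E3 ℓ3 v1 v2 v3 =
      (⋃ u1 ∈ {u | E1 u v1}, SIC E1 ℓ1 E2 ℓ2 E3 ℓ3 u1 v2 v3) ∪
      (⋃ u2 ∈ {u | E2 u v2}, SIC E1 ℓ1 E2 ℓ2 E3 ℓ3 v1 u2 v3)) ∧
    ((∀ u, ¬ E1 u v1) → (∀ u, ¬ E2 u v2) →
      SIC E1 ℓ1 E2 ℓ2 E3 ℓ3 v1 v2 v3 = ∅) := by
  have hrec : SIC E1 ℓ1 E2 ℓ2 E3 ℓ3 v1 v2 v3 =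
      (⋃ u1 ∈ {u | E1 u v1}, SIC E1 ℓ1 E2 ℓ2 E3 ℓ3 u1 v2 v3) ∪
      (⋃ u2 ∈ {u | E2 u v2}, SIC E1 ℓ1 E2 ℓ2 E3 ℓ3 v1 u2 v3) := by
    refine Set.Subset.antisymm (fun z hz => ?_) (Set.union_subset
      (Set.iUnion₂_subset fun _ => SIC_subset_of_edge_left)
      (Set.iUnion₂_subset fun _ => SIC_subset_of_edge_right))
    have hne := ne_nil_of_mem_SIC hz
    obtain ⟨hq, h1, h2⟩ := hz
    rcases getLast?_eq_or_exists_edge_mem_subseqAt h1 hne with hlast1 | ⟨u1, hu1, h1'⟩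
    · rcases getLast?_eq_or_exists_edge_mem_subseqAt h2 hne with hlast2 | ⟨u2, hu2, h2'⟩
      · exact absurd (Option.some_injective _ (hlast1.symm.trans hlast2)) hl
      · exact Or.inr (Set.mem_biUnion hu2 ⟨hq, h1, h2'⟩)
    · exact Or.inl (Set.mem_biUnion hu1 ⟨hq, h1', h2⟩)
  exact ⟨hrec, fun h1 h2 => by simp [hrec, h1, h2]⟩
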